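/- A lattice polytope Δ containing the origin in its interior is reflexive if and only if both Δ and Δ* are canonical polytopes. Equivalently, the good pairs (Δ₁, Δ₂) with Δ₁ = Δ₂ are exactly the reflexive polytopes. -/

import Mathlib

open Finset

variable {d : ℕ}

noncomputable section

/-- The standard pairing on `ℝ^d`. -/
def pairR (x y : Fin d → ℝ) : ℝ := ∑ i, x i * y i

/-- The polar of a subset of `ℝ^d`. -/
def polar (Δ : Set (Fin d → ℝ)) : Set (Fin d → ℝ) :=
  {y | ∀ x ∈ Δ, pairR x y ≥ -1}

/-- A point of the standard lattice `ℤ^d ⊆ ℝ^d`. -/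
def IsLatticePt (x : Fin d → ℝ) : Prop := ∀ i, ∃ z : ℤ, x i = (z : ℝ)

/-- A polytope: the convex hull of finitely many points. -/
def IsPolytope (Δ : Set (Fin d → ℝ)) : Prop :=
  ∃ S : Finset (Fin d → ℝ), Δ = convexHull ℝ (S : Set (Fin d → ℝ))

/-- A lattice polytope: the convex hull of finitely many lattice points. -/
def IsLatticePolytope (Δ : Set (Fin d → ℝ)) : Prop :=
  ∃ S : Finset (Fin d → ℝ), (∀ x ∈ S, IsLatticePt x) ∧ Δ = convexHull ℝ (S : Set (Fin d → ℝ))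

/-- A canonical polytope: a lattice polytope whose unique interior lattice point
is the origin. -/
def IsCanonical (Δ : Set (Fin d → ℝ)) : Prop :=
  IsLatticePolytope Δ ∧ (0 : Fin d → ℝ) ∈ interior Δ ∧
    ∀ x ∈ interior Δ, IsLatticePt x → x = 0

/-- A good pair: `Δ₁ ⊆ Δ₂` with `Δ₁` and `Δ₂*` canonical. -/
def IsGoodPair (Δ₁ Δ₂ : Set (Fin d → ℝ)) : Prop :=
  Δ₁ ⊆ Δ₂ ∧ IsCanonical Δ₁ ∧ IsCanonical (polar Δ₂)

/-! A lattice point `y` interior to the polar of a finite set `S` of lattice points pairs to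
more than `-1`, hence, by integrality, nonnegatively with every point of `S`. The whole ray
through `y` then lies in the polar of `S`, which is bounded as soon as it is a polytope, so
`y = 0`. This applies to `Δ* = (conv S)* = S*` and, by the bipolar theorem, to
`Δ = Δ** = (conv S')* = S'*` when `Δ* = conv S'`. -/

open Filter Topology

theorem pairR_eq_dotProduct (x y : Fin d → ℝ) : pairR x y = x ⬝ᵥ y := rfl

theorem pairR_comm (x y : Fin d → ℝ) : pairR x y = pairR y x := dotProduct_comm x y

theorem pairR_smul_right (x y : Fin d → ℝ) (t : ℝ) : pairR x (t • y) = t * pairR x y :=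
  dotProduct_smul t x y

theorem exists_pairR_eq (f : (Fin d → ℝ) →L[ℝ] ℝ) : ∃ v, ∀ w, f w = pairR w v := by
  refine ⟨fun i => f (Pi.single i 1), fun w => ?_⟩
  rw [← ContinuousLinearMap.coe_coe, LinearMap.pi_apply_eq_sum_univ]
  simp only [pairR, smul_eq_mul]
  congr! with i
  simp [Pi.single_apply, eq_comm]

theorem IsLatticePt.pairR_nonneg {x y : Fin d → ℝ} (hx : IsLatticePt x) (hy : IsLatticePt y)
    (h : -1 < pairR x y) : 0 ≤ pairR x y := by
  choose a ha using hx
  choose b hb using hy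
  have hab : pairR x y = ((∑ i, a i * b i : ℤ) : ℝ) := by simp [pairR, ha, hb]
  rw [hab] at h ⊢
  have : (-1 : ℤ) < ∑ i, a i * b i := by exact_mod_cast h
  exact_mod_cast (show 0 ≤ ∑ i, a i * b i by omega)

theorem subset_polar_comm {A B : Set (Fin d → ℝ)} (h : A ⊆ polar B) : B ⊆ polar A :=
  fun y hy x hx => pairR_comm x y ▸ h hx y hy

theorem polar_convexHull (s : Set (Fin d → ℝ)) : polar (convexHull ℝ s) = polar s := by
  refine subset_antisymm (fun y hy x hx => hy x (subset_convexHull ℝ s hx)) (fun y hy => ?_)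
  have hlin : IsLinearMap ℝ (fun x : Fin d → ℝ => pairR x y) :=
    ⟨fun a b => add_dotProduct a b y, fun c a => smul_dotProduct c a y⟩
  exact convexHull_min hy (convex_halfSpace_ge hlin (-1))

theorem zero_mem_interior_polar (S : Finset (Fin d → ℝ)) :
    (0 : Fin d → ℝ) ∈ interior (polar (S : Set (Fin d → ℝ))) := by
  have hopen : IsOpen {y : Fin d → ℝ | ∀ x ∈ S, -1 < pairR x y} := by
    simp only [Set.ofPred_forall]
    exact isOpen_biInter_finset fun x _ =>
      isOpen_lt continuous_const (continuous_const.dotProduct continuous_id)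
  exact interior_maximal (fun y hy x hx => (hy x hx).le) hopen (by simp [pairR])

theorem polar_polar {Δ : Set (Fin d → ℝ)} (hconv : Convex ℝ Δ) (hclosed : IsClosed Δ)
    (h0 : (0 : Fin d → ℝ) ∈ Δ) : polar (polar Δ) = Δ := by
  refine subset_antisymm (fun z hz => ?_) (subset_polar_comm subset_rfl)
  by_contra hzΔ
  obtain ⟨f, u, hfΔ, hfz⟩ := geometric_hahn_banach_closed_point hconv hclosed hzΔ
  have hu : 0 < u := by simpa using hfΔ 0 h0
  obtain ⟨v, hv⟩ := exists_pairR_eq f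
  have hpair : ∀ w, pairR w (-u⁻¹ • v) = -(f w / u) := fun w => by
    rw [pairR_smul_right, ← hv]; field_simp
  have hsep : -u⁻¹ • v ∈ polar Δ := fun x hx => by
    rw [hpair]; linarith [(div_lt_one hu).2 (hfΔ x hx)]
  have hz' := hz _ hsep
  rw [pairR_comm, hpair] at hz'
  linarith [(one_lt_div hu).2 hfz]

theorem neg_one_lt_pairR_of_mem_interior {K : Set (Fin d → ℝ)} {x y : Fin d → ℝ}
    (hK : ∀ z ∈ K, -1 ≤ pairR x z) (hy : y ∈ interior K) : -1 < pairR x y := by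
  rcases eq_or_ne x 0 with rfl | hx
  · simp [pairR]
  have hmove : Tendsto (fun c : ℝ => y - c • x) (𝓝[>] 0) (𝓝 y) :=
    ((continuous_const.sub (continuous_id.smul continuous_const)).tendsto' 0 y
      (by simp)).mono_left nhdsWithin_le_nhds
  obtain ⟨c, hcK, hc⟩ :=
    ((hmove.eventually (mem_interior_iff_mem_nhds.1 hy)).and self_mem_nhdsWithin).exists
  have hxx : 0 < x ⬝ᵥ x :=
    lt_of_le_of_ne (by simpa using dotProduct_star_self_nonneg x)
      (Ne.symm (dotProduct_self_eq_zero.not.2 hx))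
  have hstep := hK _ hcK
  rw [pairR_eq_dotProduct, dotProduct_sub, dotProduct_smul, smul_eq_mul] at hstep
  rw [pairR_eq_dotProduct]
  nlinarith [mul_pos (Set.mem_Ioi.1 hc) hxx]

theorem eq_zero_of_forall_smul_mem {E : Type*} [NormedAddCommGroup E] [NormedSpace ℝ E]
    {K : Set E} (hK : Bornology.IsBounded K) {y : E} (h : ∀ t : ℝ, 0 ≤ t → t • y ∈ K) :
    y = 0 := by
  obtain ⟨C, hC⟩ := hK.exists_norm_le
  by_contra hy
  have hy' : 0 < ‖y‖ := norm_pos_iff.2 hy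
  have hfar := hC _ (h ((|C| + 1) / ‖y‖) (by positivity))
  rw [norm_smul, Real.norm_of_nonneg (by positivity), div_mul_cancel₀ _ hy'.ne'] at hfar
  linarith [le_abs_self C]

theorem eq_zero_of_mem_interior_polar {S : Finset (Fin d → ℝ)} (hS : ∀ x ∈ S, IsLatticePt x)
    (hbdd : Bornology.IsBounded (polar (S : Set (Fin d → ℝ)))) {y : Fin d → ℝ}
    (hy : y ∈ interior (polar (S : Set (Fin d → ℝ)))) (hyl : IsLatticePt y) : y = 0 := by
  have hnonneg : ∀ x ∈ S, 0 ≤ pairR x y := fun x hx =>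
    (hS x hx).pairR_nonneg hyl
      (neg_one_lt_pairR_of_mem_interior (K := polar S) (fun z hz => hz x hx) hy)
  refine eq_zero_of_forall_smul_mem hbdd fun t ht x hx => ?_
  rw [pairR_smul_right]
  nlinarith [hnonneg x hx]

theorem IsLatticePolytope.isCompact {Δ : Set (Fin d → ℝ)} (hΔ : IsLatticePolytope Δ) :
    IsCompact Δ := by
  obtain ⟨S, -, rfl⟩ := hΔ
  exact S.finite_toSet.isCompact_convexHull (𝕜 := ℝ)

theorem IsLatticePolytope.convex {Δ : Set (Fin d → ℝ)} (hΔ : IsLatticePolytope Δ) :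
    Convex ℝ Δ := by
  obtain ⟨S, -, rfl⟩ := hΔ
  exact convex_convexHull ℝ _

theorem IsLatticePolytope.isCanonical_of_eq_polar {P : Set (Fin d → ℝ)}
    (hP : IsLatticePolytope P) {S : Finset (Fin d → ℝ)} (hS : ∀ x ∈ S, IsLatticePt x)
    (hPS : P = polar (S : Set (Fin d → ℝ))) : IsCanonical P := by
  subst hPS
  exact ⟨hP, zero_mem_interior_polar S, fun y hy hyl =>
    eq_zero_of_mem_interior_polar hS hP.isCompact.isBounded hy hyl⟩

theorem IsLatticePolytope.isCanonical_polar {Δ : Set (Fin d → ℝ)} (hΔ : IsLatticePolytope Δ)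
    (hpol : IsLatticePolytope (polar Δ)) : IsCanonical (polar Δ) := by
  obtain ⟨S, hS, rfl⟩ := hΔ
  exact hpol.isCanonical_of_eq_polar hS (polar_convexHull _)

theorem IsLatticePolytope.isCanonical {Δ : Set (Fin d → ℝ)} (hΔ : IsLatticePolytope Δ)
    (h0 : (0 : Fin d → ℝ) ∈ interior Δ) (hpol : IsLatticePolytope (polar Δ)) :
    IsCanonical Δ := by
  obtain ⟨S, hS, hpolS⟩ := hpol
  refine hΔ.isCanonical_of_eq_polar hS ?_
  rw [← polar_convexHull, ← hpolS, polar_polar hΔ.convex hΔ.isCompact.isClosed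
    (interior_subset h0)]

/-- A lattice polytope `Δ` with `0` in its interior is reflexive
iff both `Δ` and `Δ*` are canonical; equivalently, iff `(Δ, Δ)` is a good pair. -/
theorem stmt6 (Δ : Set (Fin d → ℝ)) (hΔ : IsLatticePolytope Δ)
    (h0 : (0 : Fin d → ℝ) ∈ interior Δ) :
    (IsLatticePolytope (polar Δ) ↔ IsCanonical Δ ∧ IsCanonical (polar Δ)) ∧
    (IsLatticePolytope (polar Δ) ↔ IsGoodPair Δ Δ) := by
  have reflexive_iff : IsLatticePolytope (polar Δ) ↔ IsCanonical Δ ∧ IsCanonical (polar Δ) :=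
    ⟨fun hpol => ⟨hΔ.isCanonical h0 hpol, hΔ.isCanonical_polar hpol⟩, fun h => h.2.1⟩
  exact ⟨reflexive_iff, reflexive_iff.trans ⟨fun h => ⟨subset_rfl, h⟩, fun h => h.2⟩⟩
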